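/- arXiv:1908.09643 — 4 statements merged into one kernel-verified Lean document; each statement's English description precedes it below -/
import Mathlib

section
/- Suppose that for all a,b,c,d ∈ X the maps satisfy condition (3.6): T_{deg(a)⁻¹} ∘ T_{deg(c)⁻¹} ∘ ρ_l(σ^{bd}_{ac}) = T_{deg(b)⁻¹} ∘ T_{deg(d)⁻¹} ∘ ρ_r(σ^{bd}_{ac}) as maps L → L. Then for all a,b,c,d ∈ X condition (2.8) holds: ρ_l(σ^{bd}_{ac}) ∘ T_{deg(d)} ∘ T_{deg(b)} = ρ_r(σ^{bd}_{ac}) ∘ T_{deg(c)} ∘ T_{deg(a)} as maps L → L. -/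
/-- If `σ` satisfies condition (3.6), then it satisfies condition (2.8). -/
theorem cond28_of_cond36 (k L X G : Type*) [CommRing k] [Ring L] [Algebra k L] [Fintype X] [Group G]
    (deg : X → G) (T : G → L ≃ₐ[k] L)
    (hT : ∀ (α : G) (f : L), T α (T α⁻¹ f) = f)
    (σ : X → X → X → X → L)
    (h36 : ∀ a b c d : X, ∀ g : L,
      T (deg a)⁻¹ (T (deg c)⁻¹ (σ b d a c * g)) =
        T (deg b)⁻¹ (T (deg d)⁻¹ (g * σ b d a c))) :
    ∀ a b c d : X, ∀ g : L,
      σ b d a c * T (deg d) (T (deg b) g) = T (deg c) (T (deg a) g) * σ b d a c := by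
  intro a b c d g
  have hT' : ∀ (α : G) (f : L), T α⁻¹ (T α f) = f := by
    intro α f
    have := hT α⁻¹ f
    rwa [inv_inv] at this
  have key : T (deg c) (T (deg a) (T (deg b)⁻¹ (T (deg d)⁻¹ (σ b d a c)))) = σ b d a c := by
    have h1 := h36 a b c d 1
    simp only [mul_one, one_mul] at h1
    rw [← h1, hT, hT]
  have h := h36 a b c d (T (deg d) (T (deg b) g))
  simp only [map_mul, hT'] at h
  have h2 := congrArg (T (deg c)) (congrArg (T (deg a)) h)
  simp only [map_mul, hT, key] at h2
  exact h2
end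

section
/- Condition (3.6) — T_{deg(a)⁻¹} ∘ T_{deg(c)⁻¹} ∘ ρ_l(σ^{bd}_{ac}) = T_{deg(b)⁻¹} ∘ T_{deg(d)⁻¹} ∘ ρ_r(σ^{bd}_{ac}) for all a,b,c,d ∈ X — holds if and only if both condition (2.8) — ρ_l(σ^{bd}_{ac}) ∘ T_{deg(d)} ∘ T_{deg(b)} = ρ_r(σ^{bd}_{ac}) ∘ T_{deg(c)} ∘ T_{deg(a)} for all a,b,c,d ∈ X — and condition (4.1) — T_{deg(a)⁻¹}(T_{deg(c)⁻¹}(σ^{bd}_{ac})) = T_{deg(b)⁻¹}(T_{deg(d)⁻¹}(σ^{bd}_{ac})) for all a,b,c,d ∈ X — hold. -/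
/-- Condition (3.6) holds if and only if conditions (2.8) and (4.1) both hold. -/
theorem cond36_iff_cond28_and_cond41 (k L X G : Type*) [CommRing k] [Ring L] [Algebra k L] [Fintype X] [Group G]
    (deg : X → G) (T : G → L ≃ₐ[k] L)
    (hT : ∀ (α : G) (f : L), T α (T α⁻¹ f) = f)
    (σ : X → X → X → X → L) :
    (∀ a b c d : X, ∀ g : L,
      T (deg a)⁻¹ (T (deg c)⁻¹ (σ b d a c * g)) =
        T (deg b)⁻¹ (T (deg d)⁻¹ (g * σ b d a c))) ↔
    ((∀ a b c d : X, ∀ g : L,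
      σ b d a c * T (deg d) (T (deg b) g) = T (deg c) (T (deg a) g) * σ b d a c) ∧
     (∀ a b c d : X,
      T (deg a)⁻¹ (T (deg c)⁻¹ (σ b d a c)) = T (deg b)⁻¹ (T (deg d)⁻¹ (σ b d a c)))) := by
  have hT' : ∀ (α : G) (f : L), T α⁻¹ (T α f) = f := by
    intro α f
    have := hT α⁻¹ f
    rwa [inv_inv] at this
  constructor
  · intro h36
    have h41 : ∀ a b c d : X,
        T (deg a)⁻¹ (T (deg c)⁻¹ (σ b d a c)) = T (deg b)⁻¹ (T (deg d)⁻¹ (σ b d a c)) := by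
      intro a b c d
      have := h36 a b c d 1
      simpa using this
    refine ⟨?_, h41⟩
    intro a b c d g
    have h := h36 a b c d (T (deg d) (T (deg b) g))
    have h2 := congrArg (fun x => T (deg c) (T (deg a) x)) h
    simp only [map_mul, hT, hT'] at h2
    rw [h2, ← h41]
    simp [map_mul, hT, hT']
  · rintro ⟨h28, h41⟩ a b c d g
    have h := h28 a b c d (T (deg b)⁻¹ (T (deg d)⁻¹ g))
    simp only [hT] at h
    rw [h]
    simp only [map_mul, hT, hT', h41 a b c d]
end

section
/- With σ = (σ^{ab}_{cd})_{a,b,c,d ∈ X} constructed from the finite quasigroup QG and the ternary operation μ as in the context, σ satisfies condition (3.6): T_{deg(a)⁻¹} ∘ T_{deg(c)⁻¹} ∘ ρ_l(σ^{bd}_{ac}) = T_{deg(b)⁻¹} ∘ T_{deg(d)⁻¹} ∘ ρ_r(σ^{bd}_{ac}) as maps L → L, for all a,b,c,d ∈ X. -/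
noncomputable section

/-- The `k`-algebra automorphism of `L = Q → R` given by composition with a permutation
`α` of `Q`: `T_α(f) = f ∘ α`. -/
def compAlgEquiv (k R Q : Type*) [CommRing k] [Ring R] [Algebra k R]
    (α : Equiv.Perm Q) : (Q → R) ≃ₐ[k] (Q → R) where
  toFun f := fun x => f (α x)
  invFun f := fun x => f (α.symm x)
  left_inv f := by funext x; simp
  right_inv f := by funext x; simp
  map_mul' f g := rfl
  map_add' f g := rfl
  commutes' c := rfl

/-- `T : G → Aut_k(L)` for `G` the opposite group of the symmetric group of `Q`. -/
def Tq (k R Q : Type*) [CommRing k] [Ring R] [Algebra k R] :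
    (Equiv.Perm Q)ᵐᵒᵖ → (Q → R) ≃ₐ[k] (Q → R) :=
  fun g => compAlgEquiv k R Q (MulOpposite.unop g)

/-- Right translation `λ ↦ λa` of a quasigroup `Q` as a permutation of `Q`. -/
def rT (Q : Type*) [Mul Q] (hq1 : ∀ b c : Q, ∃! a : Q, a * b = c) (a : Q) :
    Equiv.Perm Q :=
  Equiv.ofBijective (fun l => l * a)
    ⟨fun x y h => (hq1 a (y * a)).unique h rfl,
     fun c => ⟨(hq1 a c).exists.choose, (hq1 a c).exists.choose_spec⟩⟩

/-- `deg : QG → G`, where `G` is the opposite group of the symmetric group of `H = QG`,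
and `deg(a)` is the permutation `λ ↦ λa`. -/
def degq (Q : Type*) [Mul Q] (hq1 : ∀ b c : Q, ∃! a : Q, a * b = c) (a : Q) :
    (Equiv.Perm Q)ᵐᵒᵖ :=
  MulOpposite.op (rT Q hq1 a)

/-- The element `σ^{ab}_{cd}` of `L = M_H(R)` constructed from the quasigroup `QG` and the
ternary operation `μ`. -/
def sigQG (R Q M : Type*) [Ring R] [Mul Q] [DecidableEq Q]
    (ldiv : Q → Q → Q) (π : Q ≃ M) (μ : M → M → M → M) (a b c d : Q) : Q → R :=
  fun l =>
    if c = ldiv (π.symm (μ (π l) (π (l * b)) (π (l * b * a)))) (l * b * a) ∧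
       d = ldiv l (π.symm (μ (π l) (π (l * b)) (π (l * b * a)))) then 1 else 0

/-- The `σ` constructed from a finite quasigroup and a ternary operation `μ` satisfying
(QG1)–(QG5) satisfies condition (3.6). -/
theorem sigQG_cond36 (k R Q M : Type*) [CommRing k] [Ring R] [Algebra k R]
    [Fintype Q] [DecidableEq Q] [Nontrivial Q] [Mul Q]
    (hq1 : ∀ b c : Q, ∃! a : Q, a * b = c) (hq2 : ∀ a c : Q, ∃! b : Q, a * b = c)
    (ldiv : Q → Q → Q) (hldiv : ∀ x y : Q, x * ldiv x y = y)
    (π : Q ≃ M) (μ : M → M → M → M)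
    (hQG1 : ∀ a b c d : M, μ a (μ a b c) (μ (μ a b c) c d) = μ a b (μ b c d))
    (hQG2 : ∀ a b c d : M, μ (μ a b c) c d = μ (μ a b (μ b c d)) (μ b c d) d)
    (hQG3 : ∀ b c d : M, ∃! a : M, μ a b c = d)
    (hQG4 : ∀ a c d : M, ∃! b : M, μ a b c = d)
    (hQG5 : ∀ a b d : M, ∃! c : M, μ a b c = d) :
    ∀ a b c d : Q, ∀ g : Q → R,
      Tq k R Q ((degq Q hq1 a)⁻¹) (Tq k R Q ((degq Q hq1 c)⁻¹)
        (sigQG R Q M ldiv π μ b d a c * g)) =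
      Tq k R Q ((degq Q hq1 b)⁻¹) (Tq k R Q ((degq Q hq1 d)⁻¹)
        (g * sigQG R Q M ldiv π μ b d a c)) := by
  intro a b c d g
  have hinj : ∀ x u v : Q, u * x = v * x → u = v := fun x u v h =>
    (hq1 x (v * x)).unique h rfl
  have hsymm : ∀ x y : Q, (rT Q hq1 x).symm y * x = y := fun x y =>
    (rT Q hq1 x).apply_symm_apply y
  have hld : ∀ x y z : Q, (z = ldiv x y) ↔ x * z = y := by
    intro x y z
    constructor
    · rintro rfl; exact hldiv x y
    · intro h; exact (hq2 x y).unique h (hldiv x y)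
  funext l
  show (sigQG R Q M ldiv π μ b d a c * g) ((rT Q hq1 c).symm ((rT Q hq1 a).symm l)) =
    (g * sigQG R Q M ldiv π μ b d a c) ((rT Q hq1 d).symm ((rT Q hq1 b).symm l))
  set m := (rT Q hq1 c).symm ((rT Q hq1 a).symm l) with hm
  set n := (rT Q hq1 d).symm ((rT Q hq1 b).symm l) with hn
  have hmca : m * c * a = l := by rw [hm, hsymm c, hsymm a]
  have hndb : n * d * b = l := by rw [hn, hsymm d, hsymm b]
  simp only [Pi.mul_apply, sigQG]
  by_cases hC : a = ldiv (π.symm (μ (π m) (π (m * d)) (π (m * d * b)))) (m * d * b) ∧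
      c = ldiv m (π.symm (μ (π m) (π (m * d)) (π (m * d * b))))
  · obtain ⟨h1, h2⟩ := hC
    rw [hld] at h1 h2
    have hmdb : m * d * b = l := by rw [← h1, ← h2]; exact hmca
    have hnm : n = m := hinj d _ _ (hinj b _ _ (by rw [hndb, hmdb]))
    rw [hnm]
    rw [if_pos ⟨(hld _ _ _).2 h1, (hld _ _ _).2 h2⟩, one_mul, mul_one]
  · rw [if_neg hC, if_neg ?_, zero_mul, mul_zero]
    intro ⟨h1, h2⟩
    rw [hld] at h1 h2
    have hnca : n * c * a = l := by rw [← h2] at h1; rw [h1]; exact hndb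
    have hnm : n = m := hinj c _ _ (hinj a _ _ (by rw [hnca, hmca]))
    rw [hnm] at h1 h2
    exact hC ⟨(hld _ _ _).2 h1, (hld _ _ _).2 h2⟩


end
end

section
/- Let k be a commutative ring, R an associative unital k-algebra, H a nonempty finite set, and L the k-algebra of all maps H → R with pointwise operations. If L is separable with an idempotent Frobenius system, then R is separable with an idempotent Frobenius system. (Equivalently: if R is not separable with an idempotent Frobenius system, then neither is L.) -/
open scoped TensorProduct

noncomputable section

/-- For `φ : A →ₗ[k] k` and `a : A`, the `k`-linear map `A ⊗[k] A → A` sending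
`Σ e⁽¹⁾ ⊗ e⁽²⁾` to `Σ φ(a e⁽¹⁾) e⁽²⁾`. -/
def frobL (k A : Type*) [CommRing k] [Ring A] [Algebra k A]
    (φ : A →ₗ[k] k) (a : A) : A ⊗[k] A →ₗ[k] A :=
  TensorProduct.lift (LinearMap.mk₂ k (fun x y => φ (a * x) • y)
    (fun x x' y => by simp [mul_add, add_smul])
    (fun c x y => by simp [Algebra.mul_smul_comm, mul_smul])
    (fun x y y' => by simp [smul_add])
    (fun c x y => by simp [smul_comm c]))

/-- For `φ : A →ₗ[k] k` and `a : A`, the `k`-linear map `A ⊗[k] A → A` sending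
`Σ e⁽¹⁾ ⊗ e⁽²⁾` to `Σ e⁽¹⁾ φ(e⁽²⁾ a)`. -/
def frobR (k A : Type*) [CommRing k] [Ring A] [Algebra k A]
    (φ : A →ₗ[k] k) (a : A) : A ⊗[k] A →ₗ[k] A :=
  TensorProduct.lift (LinearMap.mk₂ k (fun x y => φ (y * a) • x)
    (fun x x' y => by simp [smul_add])
    (fun c x y => by simp [smul_comm c])
    (fun x y y' => by simp [add_mul, add_smul])
    (fun c x y => by simp [Algebra.smul_mul_assoc, mul_smul]))

/-- A `k`-algebra `A` is separable with an idempotent Frobenius system iff there exist a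
`k`-linear map `φ : A → k` and `e = Σ e⁽¹⁾ ⊗ e⁽²⁾ ∈ A ⊗[k] A` such that
`a = Σ φ(a e⁽¹⁾) e⁽²⁾ = Σ e⁽¹⁾ φ(e⁽²⁾ a)` for all `a ∈ A`, and `Σ e⁽¹⁾ e⁽²⁾ = 1`. -/
def SepIdemFrob (k A : Type*) [CommRing k] [Ring A] [Algebra k A] : Prop :=
  ∃ (φ : A →ₗ[k] k) (e : A ⊗[k] A),
    (∀ a : A, frobL k A φ a e = a) ∧ (∀ a : A, frobR k A φ a e = a) ∧
    LinearMap.mul' k A e = 1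

/-! Evaluation at a point `h₀ ∈ H` is an algebra map `π : (H → R) → R`, split by the
`(H → R)`-bimodule map `ι = Pi.single h₀`. For any such split quotient `π : A → R`, the
Frobenius system `(φ, e)` of `A` descends to `(φ ∘ ι, (π ⊗ π) e)` on `R`, because the
bimodule property gives `π (φ(ι a · x) y) = φ(ι(a · π x)) π y`. -/

section

variable {k A R : Type*} [CommRing k] [Ring A] [Algebra k A] [Ring R] [Algebra k R]

theorem frobL_map (π : A →ₗ[k] R) (ι : R →ₗ[k] A) (hι : ∀ r f, ι (r * π f) = ι r * f)
    (φ : A →ₗ[k] k) (a : R) (t : A ⊗[k] A) :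
    frobL k R (φ ∘ₗ ι) a (TensorProduct.map π π t) =
      π (frobL k A φ (ι a) t) := by
  induction t using TensorProduct.induction_on with
  | zero => simp
  | tmul x y => simp [frobL, hι]
  | add s t hs ht => simp only [map_add, hs, ht]

theorem frobR_map (π : A →ₗ[k] R) (ι : R →ₗ[k] A) (hι : ∀ r f, ι (π f * r) = f * ι r)
    (φ : A →ₗ[k] k) (a : R) (t : A ⊗[k] A) :
    frobR k R (φ ∘ₗ ι) a (TensorProduct.map π π t) =
      π (frobR k A φ (ι a) t) := by
  induction t using TensorProduct.induction_on with
  | zero => simp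
  | tmul x y => simp [frobR, hι]
  | add s t hs ht => simp only [map_add, hs, ht]

theorem mul'_map_algHom (π : A →ₐ[k] R) (t : A ⊗[k] A) :
    LinearMap.mul' k R (TensorProduct.map π.toLinearMap π.toLinearMap t) =
      π (LinearMap.mul' k A t) := by
  induction t using TensorProduct.induction_on with
  | zero => simp
  | tmul x y => simp
  | add s t hs ht => simp only [map_add, hs, ht]

theorem SepIdemFrob.of_split (π : A →ₐ[k] R) (ι : R →ₗ[k] A) (hπι : ∀ r, π (ι r) = r)
    (hιl : ∀ r f, ι (r * π f) = ι r * f) (hιr : ∀ r f, ι (π f * r) = f * ι r)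
    (h : SepIdemFrob k A) : SepIdemFrob k R := by
  obtain ⟨φ, e, hL, hR, hmul⟩ := h
  refine ⟨φ ∘ₗ ι, TensorProduct.map π.toLinearMap π.toLinearMap e, fun a => ?_, fun a => ?_, ?_⟩
  · rw [frobL_map π.toLinearMap ι hιl, hL, AlgHom.toLinearMap_apply, hπι]
  · rw [frobR_map π.toLinearMap ι hιr, hR, AlgHom.toLinearMap_apply, hπι]
  · rw [mul'_map_algHom, hmul, map_one]

end

theorem sepIdemFrob_of_pi_general (k R H : Type*) [CommRing k] [Ring R] [Algebra k R]
    [Nonempty H] (h : SepIdemFrob k (H → R)) : SepIdemFrob k R := by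
  classical
  obtain ⟨h₀⟩ := ‹Nonempty H›
  exact h.of_split (Pi.evalAlgHom k (fun _ => R) h₀) (LinearMap.single k (fun _ => R) h₀)
    (fun _ => by simp) (fun _ _ => Pi.single_mul_left _)
    (fun _ _ => Pi.single_mul_right _)

/-- If the algebra `L = M_H(R)` of maps from a nonempty finite set `H` to `R` is separable
with an idempotent Frobenius system, then so is `R`. -/
theorem sepIdemFrob_of_pi (k R H : Type*) [CommRing k] [Ring R] [Algebra k R]
    [Fintype H] [Nonempty H] (h : SepIdemFrob k (H → R)) : SepIdemFrob k R :=
  sepIdemFrob_of_pi_general k R H h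

end
end
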